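/- For every positive integer n, every regular n-ary tree is reversible. -/

import Mathlib

/- A tree is a partial order in which the set of strict predecessors of every
element is well-ordered. Basic vocabulary: condensations, automorphisms,
reversibility, heights, levels, nodes, upward closures, branches. -/

universe u v

/- The height of an element `t`: the order type of the set `(·,t)` of its strict
predecessors (which is well-ordered when the order is a tree). -/
open Classical in
noncomputable def treeHt {T : Type u} [PartialOrder T] (t : T) : Ordinal.{u} :=
  if h : IsWellOrder {s : T // s < t} (fun a b => (a : T) < (b : T)) then
    @Ordinal.type {s : T // s < t} (fun a b => (a : T) < (b : T)) h
  else 0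

/-- A partial order is a tree iff every set `(·,t)` is well-ordered by `<`. -/
def IsTree (T : Type u) [PartialOrder T] : Prop :=
  ∀ t : T, IsWellOrder {s : T // s < t} (fun a b => (a : T) < (b : T))

/-- A condensation: a bijective endomorphism. -/
def IsCond {T : Type u} [PartialOrder T] (f : T → T) : Prop :=
  Function.Bijective f ∧ ∀ s t : T, s < t → f s < f t

/-- An automorphism: a bijection preserving and reflecting `<`. -/
def IsAuto {T : Type u} [PartialOrder T] (f : T → T) : Prop :=
  Function.Bijective f ∧ ∀ s t : T, s < t ↔ f s < f t

/-- A structure is reversible iff every condensation is an automorphism. -/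
def Reversible (T : Type u) [PartialOrder T] : Prop :=
  ∀ f : T → T, IsCond f → IsAuto f

/-- The `α`-th level: elements of height `α`. -/
def level (T : Type u) [PartialOrder T] (α : Ordinal.{u}) : Set T :=
  {t : T | treeHt t = α}

/-- The height of the tree: the least ordinal `α` with `L_α = ∅`. -/
noncomputable def treeHeight (T : Type u) [PartialOrder T] : Ordinal.{u} :=
  sInf {α : Ordinal.{u} | level T α = ∅}

/-- Nodes: equivalence classes of the relation `s ∼ t` iff `(·,s) = (·,t)`. -/
def IsNode {T : Type u} [PartialOrder T] (N : Set T) : Prop :=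
  ∃ t : T, N = {s : T | Set.Iio s = Set.Iio t}

/-- `S↑`, the upward closure of `S`. -/
def upClo {T : Type u} [PartialOrder T] (S : Set T) : Set T :=
  {t : T | ∃ s ∈ S, s ≤ t}

/-- A branch: a maximal chain. -/
def IsBranch {T : Type u} [PartialOrder T] (b : Set T) : Prop :=
  IsMaxChain (· ≤ ·) b

/- The height (order type) of a chain (junk value `0` if not well-ordered;
in a tree every chain is well-ordered). -/
open Classical in
noncomputable def chainHt {T : Type u} [PartialOrder T] (b : Set T) : Ordinal.{u} :=
  if h : IsWellOrder b (fun x y : b => (x : T) < (y : T)) then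
    @Ordinal.type b (fun x y : b => (x : T) < (y : T)) h
  else 0

/-- A tree is `λ`-ary iff every node lying in a level of successor index has
exactly `λ` elements. -/
def IsLambdaAry (T : Type u) [PartialOrder T] (lam : Cardinal.{u}) : Prop :=
  ∀ (N : Set T) (β : Ordinal.{u}), IsNode N → N ⊆ level T (β + 1) →
    Cardinal.mk ↥N = lam

/-- A tree is regular iff it has a least element and every node lying in a level of
limit index is a singleton. -/
def IsRegularTree (T : Type u) [PartialOrder T] : Prop :=
  (∃ r : T, ∀ t : T, r ≤ t) ∧
  ∀ (N : Set T) (γ : Ordinal.{u}), IsNode N → Order.IsSuccLimit γ → N ⊆ level T γ →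
    ∃ t : T, N = {t}

section TreeHelpers

variable {T : Type u} [PartialOrder T]

theorem treeHt_eq (hT : IsTree T) (t : T) :
    treeHt t = @Ordinal.type {s : T // s < t} (fun a b => (a : T) < (b : T)) (hT t) :=
  dif_pos (hT t)

/-- Two strict predecessors of the same element are comparable. -/
theorem tree_tricho (hT : IsTree T) {a a' b : T} (ha : a < b) (ha' : a' < b) :
    a < a' ∨ a = a' ∨ a' < a := by
  haveI := hT b
  rcases @trichotomous {s : T // s < b} (fun x y => (x : T) < (y : T)) _ ⟨a, ha⟩ ⟨a', ha'⟩ with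
    h | h | h
  · exact Or.inl h
  · exact Or.inr (Or.inl (congrArg Subtype.val h))
  · exact Or.inr (Or.inr h)

theorem treeHt_eq_typein (hT : IsTree T) {a b : T} (h : a < b) :
    treeHt a = @Ordinal.typein {s : T // s < b} (fun x y => (x : T) < (y : T)) (hT b) ⟨a, h⟩ := by
  haveI := hT a
  haveI := hT b
  rw [treeHt_eq hT,
    ← @Ordinal.type_subrel {s : T // s < b} (fun x y => (x : T) < (y : T)) (hT b) ⟨a, h⟩]
  refine Ordinal.type_eq.mpr ⟨?_⟩
  exact ⟨⟨fun x => ⟨⟨x.1, lt_trans x.2 h⟩, x.2⟩, fun y => ⟨y.1.1, y.2⟩,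
    fun x => rfl, fun y => rfl⟩, Iff.rfl⟩

theorem treeHt_lt (hT : IsTree T) {a b : T} (h : a < b) : treeHt a < treeHt b := by
  haveI := hT b
  rw [treeHt_eq_typein hT h, treeHt_eq hT b]
  exact Ordinal.typein_lt_type _ _

theorem tree_eq_of_lt_of_ht (hT : IsTree T) {a a' b : T} (ha : a < b) (ha' : a' < b)
    (he : treeHt a = treeHt a') : a = a' := by
  haveI := hT b
  rw [treeHt_eq_typein hT ha, treeHt_eq_typein hT ha'] at he
  have := (Ordinal.typein_inj _).mp he
  exact congrArg Subtype.val this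

theorem tree_lt_iff_ht (hT : IsTree T) {a a' b : T} (ha : a < b) (ha' : a' < b) :
    a < a' ↔ treeHt a < treeHt a' := by
  rw [treeHt_eq_typein hT ha, treeHt_eq_typein hT ha']
  exact (@Ordinal.typein_lt_typein {s : T // s < b} (fun x y => (x : T) < (y : T)) (hT b)
    ⟨a, ha⟩ ⟨a', ha'⟩).symm

theorem tree_exists_anc (hT : IsTree T) {b : T} {γ : Ordinal.{u}} (h : γ < treeHt b) :
    ∃ a : T, a < b ∧ treeHt a = γ := by
  haveI := hT b
  rw [treeHt_eq hT] at h
  obtain ⟨x, hx⟩ := Ordinal.typein_surj _ h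
  exact ⟨x.1, x.2, by rw [treeHt_eq_typein hT x.2]; exact hx⟩

theorem treeHt_congr (hT : IsTree T) {a b : T} (h : Set.Iio a = Set.Iio b) :
    treeHt a = treeHt b := by
  haveI := hT a
  haveI := hT b
  rw [treeHt_eq hT, treeHt_eq hT]
  refine Ordinal.type_eq.mpr ⟨?_⟩
  have hab : ∀ x : T, x < a ↔ x < b := by
    simpa only [Set.ext_iff, Set.mem_Iio] using h
  exact ⟨⟨fun x => ⟨x.1, (hab x.1).mp x.2⟩, fun y => ⟨y.1, (hab y.1).mpr y.2⟩,
    fun x => rfl, fun y => rfl⟩, Iff.rfl⟩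

theorem tree_eq_of_le_of_ht (hT : IsTree T) {a a' b : T} (ha : a ≤ b) (ha' : a' ≤ b)
    (he : treeHt a = treeHt a') : a = a' := by
  rcases ha.lt_or_eq with h | h
  · rcases ha'.lt_or_eq with h' | h'
    · exact tree_eq_of_lt_of_ht hT h h' he
    · subst h'; exact absurd (he ▸ treeHt_lt hT h) (lt_irrefl _)
  · subst h
    rcases ha'.lt_or_eq with h' | h'
    · exact absurd (he ▸ treeHt_lt hT h') (lt_irrefl _)
    · exact h'.symm

theorem treeHt_le_of_map (hT : IsTree T) (f : T → T) (hinj : Function.Injective f)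
    (hmono : ∀ s t : T, s < t → f s < f t) (t : T) : treeHt t ≤ treeHt (f t) := by
  haveI := hT t
  haveI := hT (f t)
  rw [treeHt_eq hT t, treeHt_eq hT (f t)]
  refine RelEmbedding.ordinal_type_le ⟨⟨fun x => ⟨f x.1, hmono _ _ x.2⟩, ?_⟩, ?_⟩
  · intro x y hxy
    exact Subtype.ext (hinj (congrArg Subtype.val hxy))
  · intro x y
    constructor
    · intro hfxy
      have hfxy' : f x.1 < f y.1 := hfxy
      rcases tree_tricho hT x.2 y.2 with h | h | h
      · exact h
      · rw [h] at hfxy'; exact absurd hfxy' (lt_irrefl _)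
      · exact absurd (hmono _ _ h) (asymm hfxy')
    · exact fun h => hmono _ _ h

theorem tree_trunc (hT : IsTree T) {b : T} {α : Ordinal.{u}} (h : α ≤ treeHt b) :
    ∃ v : T, v ≤ b ∧ treeHt v = α ∧ Set.Iio v = {y : T | y < b ∧ treeHt y < α} := by
  rcases h.lt_or_eq with hlt | heq
  · obtain ⟨v, hvb, hvα⟩ := tree_exists_anc hT hlt
    refine ⟨v, le_of_lt hvb, hvα, ?_⟩
    ext y
    constructor
    · intro hy
      exact ⟨lt_trans hy hvb, hvα ▸ treeHt_lt hT hy⟩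
    · rintro ⟨hyb, hyα⟩
      rcases tree_tricho hT hyb hvb with h' | h' | h'
      · exact h'
      · exact absurd (h' ▸ hyα) (by rw [hvα]; exact lt_irrefl α)
      · exfalso
        have h2 : α < treeHt y := hvα ▸ treeHt_lt hT h'
        exact absurd (lt_trans h2 hyα) (lt_irrefl α)
  · refine ⟨b, le_refl b, heq.symm, ?_⟩
    ext y
    constructor
    · intro hy
      exact ⟨hy, heq ▸ treeHt_lt hT hy⟩
    · rintro ⟨hyb, _⟩
      exact hyb

end TreeHelpers

/-- For every positive integer `n`, every regular `n`-ary tree is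
reversible. -/
theorem stmt13 {T : Type u} [PartialOrder T] (hT : IsTree T)
    (n : ℕ) (hn : 0 < n) (hary : IsLambdaAry T (n : Cardinal.{u}))
    (hreg : IsRegularTree T) :
    Reversible T := by
  intro f hf
  obtain ⟨hbij, hmono⟩ := hf
  obtain ⟨⟨r, hr⟩, hregN⟩ := hreg
  have hle : ∀ t : T, treeHt t ≤ treeHt (f t) := treeHt_le_of_map hT f hbij.1 hmono
  have main : ∀ α : Ordinal.{u}, ∀ t : T, treeHt t = α →
      treeHt (f t) = α ∧ Set.Iio (f t) = f '' Set.Iio t := by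
    intro α
    induction α using Ordinal.induction with
    | h α IH =>
    intro t ht
    -- image of predecessors computation
    have hIioEq : ∀ u : T, Set.Iio u = Set.Iio t → ∀ v : T,
        Set.Iio v = {y : T | y < f u ∧ treeHt y < α} → Set.Iio v = f '' Set.Iio t := by
      intro u hu v hv
      have hut : ∀ x : T, x < u ↔ x < t := by
        simpa only [Set.ext_iff, Set.mem_Iio] using hu
      rw [hv]
      ext y
      constructor
      · rintro ⟨hyu, hyα⟩
        obtain ⟨x, hxt, hxh⟩ := tree_exists_anc hT (show treeHt y < treeHt t from ht ▸ hyα)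
        have hfx : f x < f u := hmono _ _ ((hut x).mpr hxt)
        have hfxh : treeHt (f x) = treeHt x :=
          (IH (treeHt x) (by rw [hxh]; exact hyα) x rfl).1
        have : y = f x := tree_eq_of_lt_of_ht hT hyu hfx (by rw [hfxh, hxh])
        exact ⟨x, hxt, this.symm⟩
      · rintro ⟨x, hxt, rfl⟩
        have hβ : treeHt x < α := ht ▸ treeHt_lt hT hxt
        have hfxh := (IH (treeHt x) hβ x rfl).1
        exact ⟨hmono _ _ ((hut x).mpr hxt), by rw [hfxh]; exact hβ⟩
    have hge : α ≤ treeHt (f t) := ht ▸ hle t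
    have hmain : treeHt (f t) = α := by
      by_contra hne
      have hlt : α < treeHt (f t) := lt_of_le_of_ne hge (Ne.symm hne)
      obtain ⟨c, hcft, hcα, hcIio⟩ := tree_trunc hT hge
      have hclt : c < f t := lt_of_le_of_ne hcft (fun h => hne (h ▸ hcα))
      have hcimg : Set.Iio c = f '' Set.Iio t := hIioEq t rfl c hcIio
      -- preimages of elements whose predecessors are exactly `f '' Iio t`
      have hpre : ∀ v : T, treeHt v = α → Set.Iio v = f '' Set.Iio t →
          ∀ w : T, f w = v → treeHt w = α ∧ Set.Iio w = Set.Iio t := by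
        intro v hvα hvimg w hw
        have hwle : treeHt w ≤ α := by rw [← hvα, ← hw]; exact hle w
        have hwα : treeHt w = α := by
          rcases lt_or_eq_of_le hwle with h | h
          · exfalso
            have h2 := (IH (treeHt w) h w rfl).1
            rw [hw, hvα] at h2
            exact (ne_of_lt h) h2.symm
          · exact h
        refine ⟨hwα, ?_⟩
        have fwd : ∀ x : T, x < w → x < t := by
          intro x hxw
          have hxα : treeHt x < α := hwα ▸ treeHt_lt hT hxw
          have hfxh := (IH (treeHt x) hxα x rfl).1
          have hfxv : f x ∈ f '' Set.Iio t := by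
            rw [← hvimg, ← hw]
            exact hmono _ _ hxw
          obtain ⟨x', hx't, hfx'⟩ := hfxv
          rwa [← hbij.1 hfx']
        ext x
        simp only [Set.mem_Iio]
        constructor
        · exact fwd x
        · intro hxt
          have hxα : treeHt x < treeHt w := by
            rw [hwα, ← ht]; exact treeHt_lt hT hxt
          obtain ⟨x', hx'w, hx'h⟩ := tree_exists_anc hT hxα
          have := tree_eq_of_lt_of_ht hT hxt (fwd x' hx'w) hx'h.symm
          rw [this]; exact hx'w
      obtain ⟨w, hw⟩ := hbij.2 c
      obtain ⟨hwα, hwt⟩ := hpre c hcα hcimg w hw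
      rcases Ordinal.zero_or_succ_or_isSuccLimit α with h0 | ⟨β, hsucc⟩ | hlim
      · -- zero case: t and w are both the root
        have hroot : ∀ z : T, treeHt z = α → z = r := by
          intro z hz
          by_contra hzr
          have : r < z := lt_of_le_of_ne (hr z) (Ne.symm hzr)
          have := treeHt_lt hT this
          rw [hz, h0] at this
          exact absurd this (not_lt_of_ge zero_le)
        have h1 : t = r := hroot t ht
        have h2 : w = r := hroot w hwα
        rw [h1, ← h2, hw] at hclt
        exact lt_irrefl _ hclt
      · -- successor case: counting in finite nodes
        set N := {u : T | Set.Iio u = Set.Iio t} with hNdef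
        set M := {v : T | Set.Iio v = Set.Iio c} with hMdef
        have hNlev : N ⊆ level T (β + 1) := by
          intro u hu
          show treeHt u = β + 1
          rw [treeHt_congr hT hu, ht, ← hsucc]
          exact (Ordinal.add_one_eq_succ β).symm
        have hMlev : M ⊆ level T (β + 1) := by
          intro v hv
          show treeHt v = β + 1
          rw [treeHt_congr hT hv, hcα, ← hsucc]
          exact (Ordinal.add_one_eq_succ β).symm
        have hNcard : Cardinal.mk ↥N = (n : Cardinal.{u}) := hary N β ⟨t, rfl⟩ hNlev
        have hMcard : Cardinal.mk ↥M = (n : Cardinal.{u}) := hary M β ⟨c, rfl⟩ hMlev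
        haveI hNfin : Finite ↥N :=
          Cardinal.mk_lt_aleph0_iff.mp (by rw [hNcard]; exact Cardinal.nat_lt_aleph0 n)
        obtain ⟨e⟩ : Nonempty (↥N ≃ ↥M) := Cardinal.eq.mp (hNcard.trans hMcard.symm)
        have hMht : ∀ v : ↥M, treeHt (v : T) = α := fun v => by
          rw [treeHt_congr hT v.2, hcα]
        have hψex : ∀ u : ↥N, ∃ v : ↥M, (v : T) ≤ f (u : T) := by
          rintro ⟨u, hu⟩
          have h1 : treeHt u = α := by rw [treeHt_congr hT hu, ht]
          have huα : α ≤ treeHt (f u) := h1 ▸ hle u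
          obtain ⟨v, hvle, hvα, hvIio⟩ := tree_trunc hT huα
          have hvM : Set.Iio v = Set.Iio c := by rw [hIioEq u hu v hvIio, hcimg]
          exact ⟨⟨v, hvM⟩, hvle⟩
        choose ψ hψle using hψex
        have hψuniq : ∀ (u : ↥N) (v : ↥M), (v : T) ≤ f (u : T) → ψ u = v := by
          intro u v hv
          exact Subtype.ext (tree_eq_of_le_of_ht hT (hψle u) hv (by rw [hMht, hMht]))
        have hψsurj : Function.Surjective ψ := by
          rintro ⟨v, hv⟩
          obtain ⟨w', hw'⟩ := hbij.2 v
          have hv' : Set.Iio v = Set.Iio c := hv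
          have hvimg : Set.Iio v = f '' Set.Iio t := by rw [hv', hcimg]
          obtain ⟨hw'α, hw't⟩ := hpre v (hMht ⟨v, hv⟩) hvimg w' hw'
          exact ⟨⟨w', hw't⟩, hψuniq _ _ (le_of_eq hw'.symm)⟩
        have hψinj : Function.Injective ψ :=
          (Finite.injective_iff_surjective_of_equiv e).mpr hψsurj
        have htN : t ∈ N := rfl
        have hcM : c ∈ M := rfl
        have h1 : ψ ⟨t, htN⟩ = ⟨c, hcM⟩ := hψuniq _ _ hcft
        have hwN : w ∈ N := hwt
        have h2 : ψ ⟨w, hwN⟩ = ⟨c, hcM⟩ := hψuniq _ _ (le_of_eq hw.symm)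
        have h3 : t = w := congrArg Subtype.val (hψinj (h1.trans h2.symm))
        rw [← h3] at hw
        rw [hw] at hclt
        exact lt_irrefl _ hclt
      · -- limit case: nodes at limit levels are singletons
        have hNlev : {u : T | Set.Iio u = Set.Iio t} ⊆ level T α := by
          intro u hu
          show treeHt u = α
          rw [treeHt_congr hT hu, ht]
        obtain ⟨d, hd⟩ := hregN {u : T | Set.Iio u = Set.Iio t} α ⟨t, rfl⟩ hlim hNlev
        have h1 : t ∈ {u : T | Set.Iio u = Set.Iio t} := rfl
        have h2 : w ∈ {u : T | Set.Iio u = Set.Iio t} := hwt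
        rw [hd] at h1 h2
        have hwteq : w = t := h2.trans h1.symm
        rw [hwteq] at hw
        rw [hw] at hclt
        exact lt_irrefl _ hclt
    refine ⟨hmain, ?_⟩
    have hft : Set.Iio (f t) = {y : T | y < f t ∧ treeHt y < α} := by
      ext y
      constructor
      · intro hy
        exact ⟨hy, hmain ▸ treeHt_lt hT hy⟩
      · rintro ⟨h1, _⟩
        exact h1
    exact hIioEq t rfl (f t) hft
  refine ⟨hbij, fun s t => ⟨hmono s t, fun hst => ?_⟩⟩
  have h2 := (main (treeHt t) t rfl).2
  have : f s ∈ f '' Set.Iio t := h2 ▸ hst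
  obtain ⟨s', hs', he⟩ := this
  exact (hbij.1 he) ▸ hs'
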